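/- arXiv:1104.5240 — 2 statements merged into one kernel-verified Lean document; each statement's English description precedes it below -/
import Mathlib

section
/- The robust performance region is normal: Let R ⊆ ℝ₊^K be defined as the set of points (g₁(m₁),...,g_K(m_K)) where m_k = min(max_{h_k ∈ U_k} MSE_k(v, r_k, h_k), 1), ranging over feasible beamformers v ∈ V and equalizers r_k ≥ 0, with each g_k : [0,1] → ℝ₊ continuous and strictly decreasing with g_k(1) = 0, and each U_k compact. Then R is a normal set: if x ∈ R and x' ∈ ℝ₊^K satisfies x' ≤ x componentwise, then x' ∈ R. -/
open Matrix

/-- Continuity of a parametric sup over a compact nonempty set. -/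
lemma continuous_csSup_image {X : Type*} [MetricSpace X]
    {F : ℝ → X → ℝ} (hF : Continuous fun p : ℝ × X => F p.1 p.2)
    {U : Set X} (hU : IsCompact U) (hne : U.Nonempty) :
    Continuous fun t => sSup (F t '' U) := by
  rw [Metric.continuous_iff]
  intro t₀ ε hε
  have hcomp : IsCompact (Set.Icc (t₀ - 1) (t₀ + 1) ×ˢ U) :=
    (isCompact_Icc).prod hU
  have huc : UniformContinuousOn (fun p : ℝ × X => F p.1 p.2)
      (Set.Icc (t₀ - 1) (t₀ + 1) ×ˢ U) :=
    hcomp.uniformContinuousOn_of_continuous hF.continuousOn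
  rw [Metric.uniformContinuousOn_iff] at huc
  obtain ⟨δ, hδ, hδ'⟩ := huc (ε / 2) (by linarith)
  refine ⟨min δ 1, lt_min hδ one_pos, fun t ht => ?_⟩
  have ht1 : |t - t₀| < 1 := by
    rw [Real.dist_eq] at ht; exact lt_of_lt_of_le ht (min_le_right _ _)
  have htmem : t ∈ Set.Icc (t₀ - 1) (t₀ + 1) := by
    rw [abs_sub_lt_iff] at ht1; constructor <;> linarith
  have ht0mem : t₀ ∈ Set.Icc (t₀ - 1) (t₀ + 1) := by constructor <;> linarith
  have key : ∀ h ∈ U, |F t h - F t₀ h| ≤ ε / 2 := by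
    intro h hh
    have := hδ' (t, h) (Set.mk_mem_prod htmem hh) (t₀, h) (Set.mk_mem_prod ht0mem hh)
      (by
        rw [Prod.dist_eq]
        simp only [dist_self]
        exact max_lt (lt_of_lt_of_le ht (min_le_left _ _)) hδ )
    rw [Real.dist_eq] at this
    exact this.le
  have hbdd : ∀ s, BddAbove (F s '' U) := fun s =>
    (hU.image (hF.comp (Continuous.prodMk_right s))).bddAbove
  have hnei : ∀ s, (F s '' U).Nonempty := fun s => hne.image _
  have h1 : sSup (F t '' U) ≤ sSup (F t₀ '' U) + ε / 2 := by
    apply csSup_le (hnei t)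
    rintro y ⟨h, hh, rfl⟩
    have h2 := (abs_sub_le_iff.mp (key h hh)).1
    have h3 := le_csSup (hbdd t₀) (Set.mem_image_of_mem (F t₀) hh)
    linarith
  have h2 : sSup (F t₀ '' U) ≤ sSup (F t '' U) + ε / 2 := by
    apply csSup_le (hnei t₀)
    rintro y ⟨h, hh, rfl⟩
    have h2 := (abs_sub_le_iff.mp (key h hh)).2
    have h3 := le_csSup (hbdd t) (Set.mem_image_of_mem (F t) hh)
    linarith
  rw [Real.dist_eq]
  have : |sSup (F t '' U) - sSup (F t₀ '' U)| ≤ ε / 2 :=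
    abs_sub_le_iff.mpr ⟨by linarith, by linarith⟩
  linarith

/-- The robust performance region
`R = {(g_1(m_1),…,g_K(m_K)) : v ∈ V, r_k ≥ 0}`, where
`m_k = min(sup_{h ∈ U_k} MSE_k(v, r_k, h), 1)` is the (clipped) worst-case MSE,
is a normal set: if `x ∈ R` and `0 ≤ x' ≤ x` componentwise, then `x' ∈ R`. -/
theorem robust_performance_region_normal (N K : ℕ) (hK : 0 < K)
    (σ : Fin K → ℝ) (hσ : ∀ k, 0 < σ k)
    (C D : Fin K → Matrix (Fin N) (Fin N) ℂ)
    (U : Fin K → Set (Fin N → ℂ))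
    (hUne : ∀ k, (U k).Nonempty) (hUcomp : ∀ k, IsCompact (U k))
    (V : Set (Fin K → (Fin N → ℂ))) (hVne : V.Nonempty) (hVcomp : IsCompact V)
    (g : Fin K → ℝ → ℝ)
    (hgcont : ∀ k, ContinuousOn (g k) (Set.Icc 0 1))
    (hganti : ∀ k, StrictAntiOn (g k) (Set.Icc 0 1))
    (hgpos : ∀ k, ∀ m ∈ Set.Icc (0:ℝ) 1, 0 ≤ g k m)
    (hg1 : ∀ k, g k 1 = 0)
    (MSE : Fin K → (Fin K → (Fin N → ℂ)) → ℝ → (Fin N → ℂ) → ℝ)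
    (hMSE : ∀ k v r h, MSE k v r h =
      Complex.normSq ((r : ℂ) * (star h ⬝ᵥ (C k *ᵥ (D k *ᵥ v k))) - 1)
      + ∑ k' ∈ Finset.univ.erase k,
          Complex.normSq ((r : ℂ) * (star h ⬝ᵥ (C k *ᵥ (D k' *ᵥ v k'))))
      + r ^ 2 * σ k ^ 2)
    (R : Set (Fin K → ℝ))
    (hR : R = {x : Fin K → ℝ | ∃ v ∈ V, ∃ r : Fin K → ℝ, (∀ k, 0 ≤ r k) ∧
      ∀ k, x k = g k (min (sSup ((MSE k v (r k)) '' (U k))) 1)}) :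
    ∀ x ∈ R, ∀ x' : Fin K → ℝ, (∀ k, 0 ≤ x' k) → (∀ k, x' k ≤ x k) → x' ∈ R := by
  subst hR
  rintro x ⟨v, hv, r, hr0, hx⟩ x' hx'0 hx'le
  -- continuity of MSE in (t, h)
  have hMSEcont : ∀ k, Continuous fun p : ℝ × (Fin N → ℂ) => MSE k v p.1 p.2 := by
    intro k
    have : (fun p : ℝ × (Fin N → ℂ) => MSE k v p.1 p.2) =
        fun p : ℝ × (Fin N → ℂ) =>
          Complex.normSq ((p.1 : ℂ) * (star p.2 ⬝ᵥ (C k *ᵥ (D k *ᵥ v k))) - 1)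
          + ∑ k' ∈ Finset.univ.erase k,
              Complex.normSq ((p.1 : ℂ) * (star p.2 ⬝ᵥ (C k *ᵥ (D k' *ᵥ v k'))))
          + p.1 ^ 2 * σ k ^ 2 := by
      funext p; exact hMSE k v p.1 p.2
    rw [this]
    have hdot : ∀ w : Fin N → ℂ, Continuous fun h : Fin N → ℂ => star h ⬝ᵥ w := by
      intro w
      simp only [dotProduct, Pi.star_apply]
      exact continuous_finset_sum _ fun i _ => ((continuous_apply i).star).mul continuous_const
    have hterm : ∀ w : Fin N → ℂ,
        Continuous fun p : ℝ × (Fin N → ℂ) => (p.1 : ℂ) * (star p.2 ⬝ᵥ w) := fun w =>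
      (Complex.continuous_ofReal.comp continuous_fst).mul ((hdot w).comp continuous_snd)
    exact ((Complex.continuous_normSq.comp ((hterm _).sub continuous_const)).add
      (continuous_finset_sum _ fun k' _ => Complex.continuous_normSq.comp (hterm _))).add
      ((continuous_fst.pow 2).mul continuous_const)
  -- MSE nonneg and MSE at r = 0 equals 1
  have hMSEnn : ∀ k t h, 0 ≤ MSE k v t h := by
    intro k t h
    rw [hMSE]
    have h1 : (0:ℝ) ≤ Complex.normSq ((t : ℂ) * (star h ⬝ᵥ (C k *ᵥ (D k *ᵥ v k))) - 1) :=
      Complex.normSq_nonneg _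
    have h2 : (0:ℝ) ≤ ∑ k' ∈ Finset.univ.erase k,
        Complex.normSq ((t : ℂ) * (star h ⬝ᵥ (C k *ᵥ (D k' *ᵥ v k')))) :=
      Finset.sum_nonneg fun _ _ => Complex.normSq_nonneg _
    have h3 : (0:ℝ) ≤ t ^ 2 * σ k ^ 2 := by positivity
    linarith
  set φ : Fin K → ℝ → ℝ := fun k t => min (sSup ((MSE k v t) '' (U k))) 1 with hφ
  have hφmem : ∀ k t, φ k t ∈ Set.Icc (0:ℝ) 1 := by
    intro k t
    obtain ⟨h, hh⟩ := hUne k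
    have hbdd : BddAbove ((MSE k v t) '' (U k)) :=
      ((hUcomp k).image ((hMSEcont k).comp (Continuous.prodMk_right t))).bddAbove
    have hle : (0:ℝ) ≤ sSup ((MSE k v t) '' (U k)) :=
      le_trans (hMSEnn k t h) (le_csSup hbdd (Set.mem_image_of_mem _ hh))
    exact ⟨le_min hle zero_le_one, min_le_right _ _⟩
  have hφcont : ∀ k, Continuous (φ k) := by
    intro k
    exact (continuous_csSup_image (hMSEcont k) (hUcomp k) (hUne k)).min continuous_const
  have hφ0 : ∀ k, φ k 0 = 1 := by
    intro k
    have himg : (MSE k v 0) '' (U k) = {1} := by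
      ext y
      constructor
      · rintro ⟨h, hh, rfl⟩
        simp [hMSE]
      · rintro rfl
        obtain ⟨h, hh⟩ := hUne k
        exact ⟨h, hh, by simp [hMSE]⟩
    simp [hφ, himg]
  -- intermediate value for each k
  have hex : ∀ k, ∃ t ∈ Set.Icc 0 (r k), g k (φ k t) = x' k := by
    intro k
    have hψcont : ContinuousOn (fun t => g k (φ k t)) (Set.Icc 0 (r k)) :=
      (hgcont k).comp (hφcont k).continuousOn (fun t _ => hφmem k t)
    have hmem : x' k ∈ Set.Icc ((fun t => g k (φ k t)) 0) ((fun t => g k (φ k t)) (r k)) := by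
      constructor
      · simp only [hφ0 k, hg1 k]; exact hx'0 k
      · have := hx k
        simpa [this] using hx'le k
    have := intermediate_value_Icc (hr0 k) hψcont hmem
    obtain ⟨t, ht, hteq⟩ := this
    exact ⟨t, ht, hteq⟩
  choose r' hr'mem hr'eq using hex
  exact ⟨v, hv, r', fun k => (hr'mem k).1, fun k => (hr'eq k).symm⟩
end

section
/- Reduction lemma (from below): Let f : ℝ₊ⁿ → ℝ be strictly increasing, let [a,b] ⊆ ℝ₊ⁿ be a box with a ≤ b, and let f_min ∈ ℝ. For each k define ν_k = max{ν ∈ [0,1] : f(b − ν(b_k − a_k)e_k) ≥ f_min} (assume the max exists, e.g., f continuous), and set a' = b − ∑_k ν_k (b_k − a_k) e_k. Then a ≤ a' ≤ b, and every g ∈ [a,b] with f(g) ≥ f_min satisfies g ∈ [a', b]. -/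
/-- Reduction from below: For a continuous, coordinatewise strictly
increasing `f` on a box `[a,b] ⊆ ℝ₊ⁿ` with `f_min ≤ f b`, setting
`ν_k = max{ν ∈ [0,1] : f(b − ν(b_k − a_k)e_k) ≥ f_min}` and
`a' = b − ∑_k ν_k (b_k − a_k) e_k`, we have `a ≤ a' ≤ b`, and every `g ∈ [a,b]` with
`f g ≥ f_min` lies in `[a', b]`. -/
theorem reduction_from_below (n : ℕ) (f : (Fin n → ℝ) → ℝ)
    (hcont : Continuous f)
    (hmono : ∀ x y : Fin n → ℝ, (∀ i, x i ≤ y i) → f x ≤ f y)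
    (hstrict : ∀ (x : Fin n → ℝ) (k : Fin n) (s t : ℝ), s < t →
      f (Function.update x k s) < f (Function.update x k t))
    (a b : Fin n → ℝ) (hab : ∀ i, a i ≤ b i) (hapos : ∀ i, 0 ≤ a i)
    (fmin : ℝ) (hfb : fmin ≤ f b)
    (ν : Fin n → ℝ)
    (hν : ∀ k, IsGreatest {x ∈ Set.Icc (0:ℝ) 1 |
        fmin ≤ f (Function.update b k (b k - x * (b k - a k)))} (ν k))
    (a' : Fin n → ℝ) (ha' : a' = fun k => b k - ν k * (b k - a k)) :
    (∀ i, a i ≤ a' i ∧ a' i ≤ b i) ∧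
    ∀ g : Fin n → ℝ, (∀ i, a i ≤ g i ∧ g i ≤ b i) → fmin ≤ f g →
      (∀ i, a' i ≤ g i ∧ g i ≤ b i) := by
  subst ha'
  have hνmem := fun k => (hν k).1
  have hbounds : ∀ i, a i ≤ b i - ν i * (b i - a i) ∧ b i - ν i * (b i - a i) ≤ b i := by
    intro i
    obtain ⟨⟨h0, h1⟩, _⟩ := hνmem i
    have hba : 0 ≤ b i - a i := by linarith [hab i]
    constructor
    · nlinarith
    · nlinarith
  refine ⟨hbounds, fun g hg hfg i => ?_⟩
  refine ⟨?_, (hg i).2⟩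
  by_contra hlt
  push_neg at hlt
  have hba : 0 < b i - a i := by
    rcases lt_or_eq_of_le (hab i) with h | h
    · linarith
    · exfalso
      have := (hg i).1
      have := (hg i).2
      have hz : b i - a i = 0 := by linarith
      rw [hz, mul_zero] at hlt
      linarith
  set x := (b i - g i) / (b i - a i) with hx
  have hgx : g i = b i - x * (b i - a i) := by
    rw [hx, div_mul_cancel₀ _ hba.ne']; ring
  have hx0 : 0 ≤ x := div_nonneg (by linarith [(hg i).2]) hba.le
  have hx1 : x ≤ 1 := by
    rw [div_le_one hba]; linarith [(hg i).1]
  have hνx : ν i < x := by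
    have h1 : b i - x * (b i - a i) < b i - ν i * (b i - a i) := by
      rw [← hgx]; exact hlt
    nlinarith
  have hmem : x ∈ {y ∈ Set.Icc (0:ℝ) 1 |
      fmin ≤ f (Function.update b i (b i - y * (b i - a i)))} := by
    refine ⟨⟨hx0, hx1⟩, ?_⟩
    rw [← hgx]
    refine le_trans hfg (hmono _ _ fun j => ?_)
    rcases eq_or_ne j i with rfl | hne
    · simp
    · simp [Function.update_of_ne hne, (hg j).2]
  exact absurd ((hν i).2 hmem) (not_le.mpr hνx)
end
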